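/- arXiv:2403.15828 — 2 statements merged into one kernel-verified Lean document; each statement's English description precedes it below -/
import Mathlib

section
/- For w∈(0,1), τ>0, a≥0, μ>0, p>0, G>0 with 1+τ−a > 0, the unique positive critical point of U(f) = w·log(1+τ−a−μ/f)/log(1+τ) − (1−w)·p·f/G over f>0 with 1+τ−a−μ/f>0 is f* = 2wG/(ϑ − log(1+τ)·p·(1−w)), where ϑ = sqrt(p·log(1+τ)·(1−w)/μ)·sqrt(p·μ·log(1+τ)·(1−w) + 4Gw(1+τ−a)). -/
/-!
Clearing denominators, the first-order condition `U'(f) = 0` becomes the quadratic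
`D c f² - D μ f = w μ G` with `c = 1 + τ - a` and `D = log(1+τ) p (1-w)`. The product of its
roots is `-w μ G / (D c) < 0`, so exactly one root is positive, and rationalizing the numerator
of the quadratic formula puts it in the stated form.
-/

open Real

lemma hasDerivAt_log_sub_div {c μ x : ℝ} (hx : x ≠ 0) (h : c - μ / x ≠ 0) :
    HasDerivAt (fun x => log (c - μ / x)) (μ / (x * (c * x - μ))) x := by
  have hinner : HasDerivAt (fun x => c - μ / x) (μ / x ^ 2) x := by
    simpa [div_eq_mul_inv, mul_comm] using ((hasDerivAt_inv hx).const_mul μ).const_sub c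
  convert hinner.log h using 1
  field_simp

lemma quadratic_eq_iff_eq_pos_root {A B K f : ℝ} (hA : 0 < A) (hK : 0 < K) (hf : 0 < f) :
    A * f ^ 2 - B * f = K ↔ f = 2 * K / (√(B ^ 2 + 4 * A * K) - B) := by
  set S := √(B ^ 2 + 4 * A * K)
  have hS2 : S ^ 2 = B ^ 2 + 4 * A * K := sq_sqrt (by positivity)
  have hSB : |B| < S := by
    rw [← sqrt_sq_eq_abs]; exact sqrt_lt_sqrt (sq_nonneg _) (by linarith [mul_pos hA hK])
  have hSB₁ : 0 < S - B := by linarith [le_abs_self B]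
  have hSB₂ : 0 < S + B := by linarith [neg_abs_le B]
  have hfactor : A * f ^ 2 - B * f - K
      = A * (f - 2 * K / (S - B)) * (f + 2 * K / (S + B)) := by
    field_simp
    linear_combination (-(B * f) - K) * hS2
  have hpos : 0 < A * (f + 2 * K / (S + B)) := by positivity
  constructor
  · intro h
    have : (f - 2 * K / (S - B)) * (A * (f + 2 * K / (S + B))) = 0 := by
      linear_combination -hfactor + h
    simpa [sub_eq_zero, hpos.ne'] using this
  · exact fun h ↦ sub_eq_zero.mp (by rw [hfactor, sub_eq_zero.mpr h, mul_zero, zero_mul])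

lemma deriv_eq_zero_iff_quadratic {w c μ L k G f : ℝ} (hf : 0 < f) (hdom : 0 < c - μ / f)
    (hL : 0 < L) (hG : 0 < G) :
    deriv (fun f => w * log (c - μ / f) / L - k * f / G) f = 0
      ↔ L * k * c * f ^ 2 - L * k * μ * f = w * μ * G := by
  have hcf : c * f - μ ≠ 0 := by
    have := mul_pos hdom hf
    rw [sub_mul, div_mul_cancel₀ _ hf.ne'] at this
    exact this.ne'
  have hderiv : HasDerivAt (fun f => w * log (c - μ / f) / L - k * f / G)
      (w * (μ / (f * (c * f - μ))) / L - k / G) f := by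
    refine ((hasDerivAt_log_sub_div hf.ne' hdom.ne').const_mul w).div_const L |>.sub ?_
    simpa using ((hasDerivAt_id f).const_mul k).div_const G
  rw [hderiv.deriv, sub_eq_zero, div_eq_div_iff hL.ne' hG.ne', mul_div_assoc',
    div_mul_eq_mul_div, div_eq_iff (mul_ne_zero hf.ne' hcf)]
  constructor <;> intro h <;> linear_combination -h

theorem stmt1_general (w τ a μ p G : ℝ)
    (hw : w ∈ Set.Ioo (0:ℝ) 1) (hτ : 0 < τ) (hμ : 0 < μ)
    (hp : 0 < p) (hG : 0 < G) (hfeas : 0 < 1 + τ - a) :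
    ∀ f : ℝ, 0 < f → 0 < 1 + τ - a - μ / f →
      (deriv (fun f : ℝ => w * Real.log (1 + τ - a - μ / f) / Real.log (1 + τ)
          - (1 - w) * p * f / G) f = 0 ↔
        f = 2 * w * G /
          (Real.sqrt (p * Real.log (1 + τ) * (1 - w) / μ) *
            Real.sqrt (p * μ * Real.log (1 + τ) * (1 - w) + 4 * G * w * (1 + τ - a))
          - Real.log (1 + τ) * p * (1 - w))) := by
  intro f hf hdom
  obtain ⟨hw₀, hw₁⟩ := hw
  have hL : 0 < log (1 + τ) := log_pos (by linarith)
  rw [deriv_eq_zero_iff_quadratic hf hdom hL hG]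
  generalize 1 + τ - a = c at *
  generalize log (1 + τ) = L at *
  set D := L * ((1 - w) * p)
  have hD : 0 < D := mul_pos hL (mul_pos (by linarith) hp)
  have hsqrt : √(p * L * (1 - w) / μ) * √(p * μ * L * (1 - w) + 4 * G * w * c)
      = √((D * μ) ^ 2 + 4 * (D * c) * (w * μ * G)) / μ := by
    calc _ = √(p * L * (1 - w) / μ * (p * μ * L * (1 - w) + 4 * G * w * c)) :=
          (sqrt_mul (by positivity) _).symm
      _ = √(μ ^ 2 * (p * L * (1 - w) / μ * (p * μ * L * (1 - w) + 4 * G * w * c))) / μ := by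
          rw [sqrt_mul (sq_nonneg _), sqrt_sq hμ.le]
          field_simp
      _ = _ := by
          congr 2
          field_simp
          ring
  rw [hsqrt, quadratic_eq_iff_eq_pos_root (by positivity) (by positivity) hf]
  congr! 1
  field_simp
  ring

/-- The unique positive critical point of
U(f) = w·log(1+τ−a−μ/f)/log(1+τ) − (1−w)·p·f/G over the feasible domain is
f* = 2wG/(ϑ − log(1+τ)·p·(1−w)). -/
theorem stmt1 (w τ a μ p G : ℝ)
    (hw : w ∈ Set.Ioo (0:ℝ) 1) (hτ : 0 < τ) (ha : 0 ≤ a) (hμ : 0 < μ)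
    (hp : 0 < p) (hG : 0 < G) (hfeas : 0 < 1 + τ - a) :
    ∀ f : ℝ, 0 < f → 0 < 1 + τ - a - μ / f →
      (deriv (fun f : ℝ => w * Real.log (1 + τ - a - μ / f) / Real.log (1 + τ)
          - (1 - w) * p * f / G) f = 0 ↔
        f = 2 * w * G /
          (Real.sqrt (p * Real.log (1 + τ) * (1 - w) / μ) *
            Real.sqrt (p * μ * Real.log (1 + τ) * (1 - w) + 4 * G * w * (1 + τ - a))
          - Real.log (1 + τ) * p * (1 - w))) :=
  stmt1_general w τ a μ p G hw hτ hμ hp hG hfeas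
end

section
/- For positive constants a₁, a₂, a₃ and H>0, the function f(x) = a₁·log₂(1 + a₂/(H²+x)^{a₃/2}) is convex in x on x ≥ 0. -/
/-!
With `t = H² + x` and `p = a₃ / 2`, `log (1 + a₂ / t ^ p) = s (log a₂ - p * log t)`, where
`s u = log (1 + exp u)` is the softplus function. Its derivative is the sigmoid, which is
increasing, so `s` is convex and monotone; the inner function `log a₂ - p * log t` is convex on
`t > 0` because `log` is concave. Hence the composition is convex in `t`, and so in `x`.
-/

open Real Set

lemma hasDerivAt_log_one_add_exp (u : ℝ) :
    HasDerivAt (fun u => log (1 + exp u)) (sigmoid u) u := by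
  convert ((hasDerivAt_exp u).const_add 1).log (by positivity) using 1
  rw [sigmoid_def, exp_neg]
  field_simp
  ring

lemma convexOn_log_one_add_exp : ConvexOn ℝ univ fun u => log (1 + exp u) := by
  refine Monotone.convexOn_univ_of_deriv
    (fun u => (hasDerivAt_log_one_add_exp u).differentiableAt) ?_
  rw [funext fun u => (hasDerivAt_log_one_add_exp u).deriv]
  exact sigmoid_monotone

lemma monotone_log_one_add_exp : Monotone fun u => log (1 + exp u) := by
  intro a b hab
  dsimp only
  gcongr

lemma convexOn_log_one_add_div_rpow {c p : ℝ} (hc : 0 < c) (hp : 0 ≤ p) :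
    ConvexOn ℝ (Ioi 0) fun t => log (1 + c / t ^ p) := by
  set g : ℝ → ℝ := fun t => log c - p * log t
  have hg : ConvexOn ℝ (Ioi 0) g :=
    (convexOn_const _ (convex_Ioi 0)).sub (strictConcaveOn_log_Ioi.concaveOn.smul hp)
  have hg_image : Convex ℝ (g '' Ioi 0) :=
    (isPreconnected_Ioi.image g (continuousOn_const.sub (continuousOn_const.mul
      (continuousOn_log.mono fun _ ht => ne_of_gt ht)))).convex
  refine ((convexOn_log_one_add_exp.subset (subset_univ _) hg_image).comp hg
    (monotone_log_one_add_exp.monotoneOn _)).congr fun t ht => ?_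
  simp only [g, Function.comp_apply, exp_sub, exp_log hc, rpow_def_of_pos (mem_Ioi.mp ht),
    mul_comm]

/-- For positive constants a₁, a₂, a₃ and H > 0, the function
f(x) = a₁·log₂(1 + a₂/(H²+x)^(a₃/2)) is convex in x on x ≥ 0. -/
theorem stmt8 (a1 a2 a3 H : ℝ)
    (ha1 : 0 < a1) (ha2 : 0 < a2) (ha3 : 0 < a3) (hH : 0 < H) :
    ConvexOn ℝ (Set.Ici (0:ℝ))
      (fun x => a1 * Real.logb 2 (1 + a2 / (H ^ 2 + x) ^ (a3 / 2))) := by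
  have hshift := ((convexOn_log_one_add_div_rpow ha2 (by positivity : 0 ≤ a3 / 2)).translate_right
    (H ^ 2)).subset (fun x (hx : 0 ≤ x) => show 0 < H ^ 2 + x by positivity) (convex_Ici 0)
  refine (hshift.smul (div_nonneg ha1.le (log_nonneg one_le_two))).congr fun x _ => ?_
  simp only [Function.comp_apply, smul_eq_mul, logb]
  ring
end
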